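/- If f ∈ Y_{α,β} then 1/f ∈ Y_{-α,β}. That is, if the rescaled family h^{-α} f(h + h^{-β} z) is normal with no constant limit functions along h_n → ∞, then the same holds for the family h^{α} (1/f)(h + h^{-β} z). -/

import Mathlib

open Complex Filter Set Topology OnePoint

noncomputable section
attribute [local instance] Classical.propDecidable

/-- Inversion on the Riemann sphere `ℂ ∪ {∞}`. -/
def sinv : OnePoint ℂ → OnePoint ℂ
  | ∞ => ((0 : ℂ) : OnePoint ℂ)
  | (a : ℂ) => if a = 0 then ∞ else ((a⁻¹ : ℂ) : OnePoint ℂ)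

/-- Multiplication of a point of the sphere by a (nonzero) complex scalar. -/
def smulS (c : ℂ) : OnePoint ℂ → OnePoint ℂ
  | ∞ => ∞
  | (a : ℂ) => ((c * a : ℂ) : OnePoint ℂ)

/-- The chordal (spherical) distance on the Riemann sphere. -/
def sdist : OnePoint ℂ → OnePoint ℂ → ℝ
  | (a : ℂ), (b : ℂ) => ‖a - b‖ / (Real.sqrt (1 + ‖a‖ ^ 2) * Real.sqrt (1 + ‖b‖ ^ 2))
  | (a : ℂ), ∞ => 1 / Real.sqrt (1 + ‖a‖ ^ 2)
  | ∞, (b : ℂ) => 1 / Real.sqrt (1 + ‖b‖ ^ 2)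
  | ∞, ∞ => 0

/-- A sphere-valued function is meromorphic on `U` if near every point of `U` it is either
given by an analytic function or by the reciprocal of an analytic function. -/
def MeromorphicSphereOn (f : ℂ → OnePoint ℂ) (U : Set ℂ) : Prop :=
  ∀ z ∈ U, (∃ g : ℂ → ℂ, AnalyticAt ℂ g z ∧ ∀ᶠ w in 𝓝 z, f w = (g w : OnePoint ℂ)) ∨
           (∃ g : ℂ → ℂ, AnalyticAt ℂ g z ∧ ∀ᶠ w in 𝓝 z, f w = sinv (g w : OnePoint ℂ))

/-- `f` is a rational function. -/
def IsRat (f : ℂ → OnePoint ℂ) : Prop :=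
  ∃ p q : Polynomial ℂ, q ≠ 0 ∧ ∀ z : ℂ, q.eval z ≠ 0 → f z = ((p.eval z / q.eval z : ℂ) : OnePoint ℂ)

/-- The spherical derivative `f^#` (defined as the limit of chordal difference quotients). -/
def sphDeriv (f : ℂ → OnePoint ℂ) (z : ℂ) : ℝ :=
  limUnder (𝓝[≠] z) fun w => sdist (f w) (f z) / ‖w - z‖

/-- Locally uniform convergence with respect to the spherical metric on `U`. -/
def SphConvOn (F : ℕ → ℂ → OnePoint ℂ) (φ : ℂ → OnePoint ℂ) (U : Set ℂ) : Prop :=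
  ∀ K : Set ℂ, K ⊆ U → IsCompact K → ∀ ε : ℝ, 0 < ε →
    ∀ᶠ n in atTop, ∀ z ∈ K, sdist (F n z) (φ z) < ε

/-- A family of sphere-valued functions is normal on `U` if every sequence from the family
has a subsequence converging locally uniformly on `U` in the spherical metric. -/
def NormalOn (𝓕 : Set (ℂ → OnePoint ℂ)) (U : Set ℂ) : Prop :=
  ∀ F : ℕ → ℂ → OnePoint ℂ, (∀ n, F n ∈ 𝓕) →
    ∃ σ : ℕ → ℕ, StrictMono σ ∧ ∃ φ : ℂ → OnePoint ℂ, SphConvOn (fun n => F (σ n)) φ U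

/-- The rescaled function `f_h(z) = h^{-α} f(h + h^{-β} z)`. -/
def rescale (f : ℂ → OnePoint ℂ) (α β : ℝ) (h : ℂ) : ℂ → OnePoint ℂ :=
  fun z => smulS (h ^ (-α : ℂ)) (f (h + h ^ (-β : ℂ) * z))

/-- The rescaling family `(f_h)_{|h| ≥ 1}`. -/
def YFamily (f : ℂ → OnePoint ℂ) (α β : ℝ) : Set (ℂ → OnePoint ℂ) :=
  {g | ∃ h : ℂ, 1 ≤ ‖h‖ ∧ g = rescale f α β h}

/-- No limit function of the rescaling family along `h_n → ∞` is constant (on `U`). -/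
def NoConstLimitOn (f : ℂ → OnePoint ℂ) (α β : ℝ) (U : Set ℂ) : Prop :=
  ∀ (h : ℕ → ℂ) (φ : ℂ → OnePoint ℂ), (∀ n, 1 ≤ ‖h n‖) →
    Tendsto (fun n => ‖h n‖) atTop atTop →
    SphConvOn (fun n => rescale f α β (h n)) φ U →
    ¬ ∃ c : OnePoint ℂ, ∀ z ∈ U, φ z = c

/-- The generalised Yosida class `Y_{α,β}` (for `β > -1`). -/
structure MemY (α β : ℝ) (f : ℂ → OnePoint ℂ) : Prop where
  merom : MeromorphicSphereOn f Set.univ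
  trans : ¬ IsRat f
  normal : NormalOn (YFamily f α β) Set.univ
  nonconst : NoConstLimitOn f α β Set.univ

/-- The order of `f` at a `c`-point `z`, counted via an analytic local representative;
it is `0` if `f z ≠ c`. -/
def cOrder (f : ℂ → OnePoint ℂ) (c : ℂ) (z : ℂ) : ℕ∞ :=
  if f z = (c : OnePoint ℂ) then
    sInf {n : ℕ∞ | ∃ g : ℂ → ℂ, ∃ hg : AnalyticAt ℂ (fun w => g w - c) z,
      (∀ᶠ w in 𝓝 z, f w = (g w : OnePoint ℂ)) ∧ analyticOrderAt (fun w => g w - c) z = n}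
  else 0

/-- The order of the pole of `f` at `z` (`0` if `z` is not a pole). -/
def pOrder (f : ℂ → OnePoint ℂ) (z : ℂ) : ℕ∞ :=
  if f z = ∞ then
    sInf {n : ℕ∞ | ∃ g : ℂ → ℂ, ∃ hg : AnalyticAt ℂ g z,
      (∀ᶠ w in 𝓝 z, f w = sinv (g w : OnePoint ℂ)) ∧ analyticOrderAt g z = n}
  else 0

/-- The set of poles of `f`. -/
def poles (f : ℂ → OnePoint ℂ) : Set ℂ := {z | f z = ∞}

/-- The set of zeros of `f`. -/
def zeros (f : ℂ → OnePoint ℂ) : Set ℂ := {z | f z = ((0 : ℂ) : OnePoint ℂ)}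

/-- The disc `Δ_ε(h) = {z : |z - h| < ε |h|^{-β}}`. -/
def Δ (β : ℝ) (ε : ℝ) (h : ℂ) : Set ℂ := Metric.ball h (ε * ‖h‖ ^ (-β))

end

noncomputable section
attribute [local instance] Classical.propDecidable

section Aux
attribute [local instance] Classical.propDecidable

lemma sinv_infty' : sinv ∞ = ((0 : ℂ) : OnePoint ℂ) := rfl

lemma sinv_coe' (a : ℂ) :
    sinv (a : OnePoint ℂ) = if a = 0 then ∞ else ((a⁻¹ : ℂ) : OnePoint ℂ) := rfl

lemma sinv_coe_zero' : sinv ((0 : ℂ) : OnePoint ℂ) = ∞ := by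
  rw [sinv_coe', if_pos rfl]

lemma sinv_coe_ne' (a : ℂ) (h : a ≠ 0) :
    sinv (a : OnePoint ℂ) = ((a⁻¹ : ℂ) : OnePoint ℂ) := by
  rw [sinv_coe', if_neg h]

lemma sinv_sinv' (x : OnePoint ℂ) : sinv (sinv x) = x := by
  induction x using OnePoint.rec with
  | infty => rw [sinv_infty', sinv_coe_zero']
  | coe a =>
    by_cases h : a = 0
    · subst h; rw [sinv_coe_zero', sinv_infty']
    · rw [sinv_coe_ne' a h, sinv_coe_ne' _ (inv_ne_zero h), inv_inv]

lemma smulS_coe' (c a : ℂ) : smulS c (a : OnePoint ℂ) = ((c * a : ℂ) : OnePoint ℂ) := rfl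
lemma smulS_infty' (c : ℂ) : smulS c ∞ = ∞ := rfl

lemma sdist_coe_coe (a b : ℂ) :
    sdist (a : OnePoint ℂ) (b : OnePoint ℂ)
      = ‖a - b‖ / (Real.sqrt (1 + ‖a‖ ^ 2) * Real.sqrt (1 + ‖b‖ ^ 2)) := rfl
lemma sdist_coe_infty (a : ℂ) :
    sdist (a : OnePoint ℂ) ∞ = 1 / Real.sqrt (1 + ‖a‖ ^ 2) := rfl
lemma sdist_infty_coe (b : ℂ) :
    sdist ∞ (b : OnePoint ℂ) = 1 / Real.sqrt (1 + ‖b‖ ^ 2) := rfl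
lemma sdist_infty_infty : sdist (∞ : OnePoint ℂ) ∞ = 0 := rfl

lemma sqrt_one_add_inv_sq (a : ℂ) (h : a ≠ 0) :
    Real.sqrt (1 + ‖a⁻¹‖ ^ 2) = Real.sqrt (1 + ‖a‖ ^ 2) / ‖a‖ := by
  have ha : (0:ℝ) < ‖a‖ := norm_pos_iff.mpr h
  have : 1 + ‖a⁻¹‖ ^ 2 = (1 + ‖a‖ ^ 2) / ‖a‖ ^ 2 := by
    rw [norm_inv]
    have ha2 : ‖a‖ ≠ 0 := norm_ne_zero_iff.mpr h
    field_simp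
    ring
  rw [this, Real.sqrt_div (by positivity), Real.sqrt_sq ha.le]

lemma sdist_sinv' (x y : OnePoint ℂ) : sdist (sinv x) (sinv y) = sdist x y := by
  induction x using OnePoint.rec with
  | infty =>
    induction y using OnePoint.rec with
    | infty => simp [sinv_infty', sdist_coe_coe, sdist_infty_infty]
    | coe b =>
      by_cases hb : b = 0
      · subst hb
        rw [sinv_infty', sinv_coe_zero', sdist_coe_infty, sdist_infty_coe]
      · rw [sinv_infty', sinv_coe_ne' b hb, sdist_coe_coe, sdist_infty_coe,
          sqrt_one_add_inv_sq b hb]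
        have hb' : (0:ℝ) < ‖b‖ := norm_pos_iff.mpr hb
        have hs : (0:ℝ) < Real.sqrt (1 + ‖b‖ ^ 2) := Real.sqrt_pos.mpr (by positivity)
        have hb2 : ‖b‖ ≠ 0 := norm_ne_zero_iff.mpr hb
        rw [zero_sub, norm_neg, norm_inv, norm_zero]
        norm_num
        field_simp
  | coe a =>
    induction y using OnePoint.rec with
    | infty =>
      by_cases ha : a = 0
      · subst ha
        rw [sinv_infty', sinv_coe_zero', sdist_infty_coe, sdist_coe_infty]
      · rw [sinv_infty', sinv_coe_ne' a ha, sdist_coe_coe, sdist_coe_infty,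
          sqrt_one_add_inv_sq a ha]
        have ha' : (0:ℝ) < ‖a‖ := norm_pos_iff.mpr ha
        have hs : (0:ℝ) < Real.sqrt (1 + ‖a‖ ^ 2) := Real.sqrt_pos.mpr (by positivity)
        have ha2 : ‖a‖ ≠ 0 := norm_ne_zero_iff.mpr ha
        rw [sub_zero, norm_inv, norm_zero]
        norm_num
        field_simp
    | coe b =>
      by_cases ha : a = 0
      · subst ha
        by_cases hb : b = 0
        · subst hb; rw [sinv_coe_zero', sdist_infty_infty, sdist_coe_coe]; simp
        · rw [sinv_coe_zero', sinv_coe_ne' b hb, sdist_infty_coe, sdist_coe_coe,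
            sqrt_one_add_inv_sq b hb]
          have hb' : (0:ℝ) < ‖b‖ := norm_pos_iff.mpr hb
          have hs : (0:ℝ) < Real.sqrt (1 + ‖b‖ ^ 2) := Real.sqrt_pos.mpr (by positivity)
          have hb2 : ‖b‖ ≠ 0 := norm_ne_zero_iff.mpr hb
          rw [zero_sub, norm_neg, norm_zero]
          norm_num
      · by_cases hb : b = 0
        · subst hb
          rw [sinv_coe_ne' a ha, sinv_coe_zero', sdist_coe_infty, sdist_coe_coe,
            sqrt_one_add_inv_sq a ha]
          have ha' : (0:ℝ) < ‖a‖ := norm_pos_iff.mpr ha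
          have hs : (0:ℝ) < Real.sqrt (1 + ‖a‖ ^ 2) := Real.sqrt_pos.mpr (by positivity)
          have ha2 : ‖a‖ ≠ 0 := norm_ne_zero_iff.mpr ha
          rw [sub_zero, norm_zero]
          norm_num
        · rw [sinv_coe_ne' a ha, sinv_coe_ne' b hb, sdist_coe_coe, sdist_coe_coe,
            sqrt_one_add_inv_sq a ha, sqrt_one_add_inv_sq b hb]
          have ha' : (0:ℝ) < ‖a‖ := norm_pos_iff.mpr ha
          have hb' : (0:ℝ) < ‖b‖ := norm_pos_iff.mpr hb
          have hsa : (0:ℝ) < Real.sqrt (1 + ‖a‖ ^ 2) := Real.sqrt_pos.mpr (by positivity)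
          have hsb : (0:ℝ) < Real.sqrt (1 + ‖b‖ ^ 2) := Real.sqrt_pos.mpr (by positivity)
          have hnum : ‖a⁻¹ - b⁻¹‖ = ‖a - b‖ / (‖a‖ * ‖b‖) := by
            have : a⁻¹ - b⁻¹ = (b - a) / (a * b) := by field_simp
            rw [this, norm_div, norm_mul, norm_sub_rev]
          have ha2 : ‖a‖ ≠ 0 := norm_ne_zero_iff.mpr ha
          have hb2 : ‖b‖ ≠ 0 := norm_ne_zero_iff.mpr hb
          rw [hnum]
          field_simp

lemma smulS_sinv' (c : ℂ) (hc : c ≠ 0) (x : OnePoint ℂ) :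
    smulS c⁻¹ (sinv x) = sinv (smulS c x) := by
  induction x using OnePoint.rec with
  | infty => rw [sinv_infty', smulS_infty', sinv_infty', smulS_coe', mul_zero]
  | coe a =>
    by_cases ha : a = 0
    · subst ha
      rw [sinv_coe_zero', smulS_infty', smulS_coe', mul_zero, sinv_coe_zero']
    · rw [sinv_coe_ne' a ha, smulS_coe', smulS_coe',
        sinv_coe_ne' _ (mul_ne_zero hc ha), mul_inv]

end Aux

section Aux2
attribute [local instance] Classical.propDecidable

lemma rescale_sinv' (f : ℂ → OnePoint ℂ) (α β : ℝ) (h : ℂ) (hh : h ≠ 0) (z : ℂ) :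
    rescale (fun w => sinv (f w)) (-α) β h z = sinv (rescale f α β h z) := by
  have hc : (h ^ (-(α : ℂ))) ≠ 0 := by
    simp only [ne_eq, Complex.cpow_eq_zero_iff, not_and_or, not_not]
    exact Or.inl hh
  have e1 : h ^ (-((-α : ℝ) : ℂ)) = (h ^ (-(α : ℂ)))⁻¹ := by
    rw [← Complex.cpow_neg]
    norm_num
  show smulS (h ^ (-((-α : ℝ) : ℂ))) (sinv (f (h + h ^ (-(β : ℂ)) * z)))
      = sinv (smulS (h ^ (-(α : ℂ))) (f (h + h ^ (-(β : ℂ)) * z)))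
  rw [e1]
  exact smulS_sinv' _ hc _

end Aux2

/-- `f ∈ Y_{α,β}` implies `1/f ∈ Y_{-α,β}`. -/
theorem stmt_2 (f : ℂ → OnePoint ℂ) (α β : ℝ) (hf : MemY α β f) :
    MemY (-α) β (fun z => sinv (f z)) := by
  constructor
  · -- meromorphy
    intro z hz
    rcases hf.merom z hz with ⟨g, hg, hev⟩ | ⟨g, hg, hev⟩
    · exact Or.inr ⟨g, hg, hev.mono fun w hw => by simp only [hw]⟩
    · exact Or.inl ⟨g, hg, hev.mono fun w hw => by simp only [hw, sinv_sinv']⟩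
  · -- transcendence
    rintro ⟨p, q, hq, hpq⟩
    by_cases hp : p = 0
    · -- then f ≡ ∞, contradicting no-constant-limits
      have hfe : ∀ z : ℂ, q.eval z ≠ 0 → f z = ∞ := by
        intro z hz
        have h1 : sinv (f z) = ((p.eval z / q.eval z : ℂ) : OnePoint ℂ) := hpq z hz
        have h3 : sinv (f z) = (((0 : ℂ)) : OnePoint ℂ) := by
          rw [h1, hp]; simp
        calc f z = sinv (sinv (f z)) := (sinv_sinv' _).symm
          _ = ∞ := by rw [h3]; exact sinv_coe_zero'
      have hall : ∀ z : ℂ, f z = ∞ := by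
        intro z0
        have hroots : {x : ℂ | q.IsRoot x}.Finite := q.finite_setOf_isRoot hq
        have hmem : ({x : ℂ | q.IsRoot x} \ {z0})ᶜ ∈ 𝓝 z0 :=
          ((Set.Finite.diff hroots : ({x : ℂ | q.IsRoot x} \ {z0}).Finite).isClosed.isOpen_compl).mem_nhds (by simp)
        have h3 : ∀ᶠ w in 𝓝 z0, w ∉ ({x : ℂ | q.IsRoot x} \ {z0}) := hmem
        have hne : ∀ᶠ w in 𝓝[≠] z0, q.eval w ≠ 0 := by
          filter_upwards [h3.filter_mono nhdsWithin_le_nhds, self_mem_nhdsWithin]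
            with w hw hw' hroot
          exact hw ⟨hroot, hw'⟩
        rcases hf.merom z0 (mem_univ z0) with ⟨g, hg, hev⟩ | ⟨g, hg, hev⟩
        · exfalso
          obtain ⟨w, hw1, hw2⟩ := ((hev.filter_mono nhdsWithin_le_nhds).and hne).exists
          exact OnePoint.coe_ne_infty (g w) (by rw [← hw1, hfe w hw2])
        · have hev0 : ∀ᶠ w in 𝓝[≠] z0, g w = 0 := by
            filter_upwards [hev.filter_mono nhdsWithin_le_nhds, hne] with w hw hqw
            by_contra hgw
            have hfw := hfe w hqw
            rw [hw, sinv_coe_ne' _ hgw] at hfw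
            exact OnePoint.coe_ne_infty _ hfw
          have hg0 : g z0 = 0 := by
            have t1 : Tendsto g (𝓝[≠] z0) (𝓝 (g z0)) :=
              hg.continuousAt.continuousWithinAt
            have t2 : Tendsto g (𝓝[≠] z0) (𝓝 0) :=
              Tendsto.congr' (by filter_upwards [hev0] with w hw using hw.symm)
                tendsto_const_nhds
            exact tendsto_nhds_unique t1 t2
          rw [hev.self_of_nhds, hg0, sinv_coe_zero']
      refine hf.nonconst (fun n => ((n + 1 : ℕ) : ℂ)) (fun _ => ∞) (fun n => ?_) ?_ ?_
        ⟨∞, fun _ _ => rfl⟩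
      · rw [Complex.norm_natCast]
        exact_mod_cast Nat.one_le_iff_ne_zero.mpr (Nat.succ_ne_zero n)
      · have : Tendsto (fun n : ℕ => ((n + 1 : ℕ) : ℝ)) atTop atTop :=
          tendsto_natCast_atTop_atTop.comp (tendsto_add_atTop_nat 1)
        refine this.congr fun n => ?_
        rw [Complex.norm_natCast]
      · intro K hK hKc ε hε
        refine Eventually.of_forall fun n => fun z hz => ?_
        have h4 : rescale f α β ((n + 1 : ℕ) : ℂ) z = ∞ := by
          simp only [rescale, hall, smulS_infty']
        show sdist (rescale f α β ((n + 1 : ℕ) : ℂ) z) (∞ : OnePoint ℂ) < ε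
        rw [h4, sdist_infty_infty]
        exact hε
    · -- otherwise f itself would be rational
      refine hf.trans ⟨q * q, p * q, mul_ne_zero hp hq, fun z hz => ?_⟩
      rw [Polynomial.eval_mul] at hz
      have hpz : p.eval z ≠ 0 := fun h0 => hz (by rw [h0, zero_mul])
      have hqz : q.eval z ≠ 0 := fun h0 => hz (by rw [h0, mul_zero])
      have h1 : sinv (f z) = ((p.eval z / q.eval z : ℂ) : OnePoint ℂ) := hpq z hqz
      have h2 : f z = sinv ((p.eval z / q.eval z : ℂ) : OnePoint ℂ) := by
        rw [← h1, sinv_sinv']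
      rw [h2, sinv_coe_ne' _ (div_ne_zero hpz hqz)]
      rw [Polynomial.eval_mul, Polynomial.eval_mul, OnePoint.coe_eq_coe]
      rw [inv_div]
      field_simp
  · -- normality
    intro F hF
    choose hs h1 h2 using hF
    obtain ⟨σ, hσ, φ, hconv⟩ :=
      hf.normal (fun n => rescale f α β (hs n)) (fun n => ⟨hs n, h1 n, rfl⟩)
    refine ⟨σ, hσ, fun z => sinv (φ z), ?_⟩
    intro K hK hKc ε hε
    filter_upwards [hconv K hK hKc ε hε] with n hn z hz
    have hne : hs (σ n) ≠ 0 := by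
      intro h0
      have := h1 (σ n)
      rw [h0, norm_zero] at this
      norm_num at this
    show sdist (F (σ n) z) (sinv (φ z)) < ε
    rw [h2 (σ n), rescale_sinv' f α β _ hne, sdist_sinv']
    exact hn z hz
  · -- no constant limits
    intro hs φ hnorm htend hconv hconst
    obtain ⟨c, hc⟩ := hconst
    refine hf.nonconst hs (fun z => sinv (φ z)) hnorm htend ?_
      ⟨sinv c, fun z hz => by show sinv (φ z) = sinv c; rw [hc z hz]⟩
    intro K hK hKc ε hε
    filter_upwards [hconv K hK hKc ε hε] with n hn z hz
    have hne : hs n ≠ 0 := by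
      intro h0
      have := hnorm n
      rw [h0, norm_zero] at this
      norm_num at this
    show sdist (rescale f α β (hs n) z) (sinv (φ z)) < ε
    rw [← sdist_sinv', sinv_sinv', ← rescale_sinv' f α β _ hne]
    exact hn z hz


end
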